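/- arXiv:2102.07451 — 2 statements merged into one kernel-verified Lean document; each statement's English description precedes it below -/
import Mathlib

section
/- Let $f : \mathbb{T} \to \mathbb{R}$ be Hölder continuous with exponent $\delta \in (0,1]$ and seminorm $|f|_{C^\delta}$, and write $f = f_+ - f_-$ with $f_\pm := \max(\pm f, 0)$. Let $\phi_r$ be a mollifier supported in $(-r,r)$ with $\phi_r \geq 0$ and $\int \phi_r = 1$, where $r = s(\eta/|f|_{C^\delta})^{1/\delta}$ for parameters $0 < \eta, s < 1$. Let $\chi : \mathbb{T} \to \{0,1\}$ be any indicator function supported where $f < \eta$, let $\psi_1 := \phi_r * \chi$, and define $c := \frac{1}{2}\phi_r * (\eta \chi + f_-)$. Then at every point $\alpha$ with $f(\alpha) < \eta$ (in particular on the support of $c$), one has $|2c(\alpha) + f(\alpha)| \leq \eta(2 + s^\delta)$. -/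
/-!
Write `2c + f = φ ⋆ (η χ) + (φ ⋆ f₋ - f₋) + f₊`. The first term is an average of values in
`[0, η]`, and `f₊ ∈ [0, η]` where `f < η`. The mollification error is at most the oscillation of
`f₋` over the support of `φ`, and `f₋` is Hölder with the constant of `f`, so this oscillation is
at most `L r ^ δ = η s ^ δ`.
-/

open Real MeasureTheory

open Set Function Metric ContinuousLinearMap
open scoped Convolution

theorem convolutionExistsAt_of_dist_le {G E' : Type*} [NormedAddCommGroup G] [MeasurableSpace G]
    [BorelSpace G] [SecondCountableTopology G] {μ : Measure G} [μ.IsAddLeftInvariant] [SFinite μ]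
    [NormedAddCommGroup E'] [NormedSpace ℝ E'] {f : G → ℝ} {g : G → E'} {x₀ : G} {R ε : ℝ} {z₀ : E'}
    (hf : support f ⊆ ball 0 R) (hintf : ∫ x, f x ∂μ = 1) (hmg : AEStronglyMeasurable g μ)
    (hg : ∀ x ∈ ball x₀ R, dist (g x) z₀ ≤ ε) :
    ConvolutionExistsAt f g x₀ (lsmul ℝ ℝ) μ := by
  refine BddAbove.convolutionExistsAt _ ?_ isOpen_ball.measurableSet
    (subset_trans ?_ hf) (integrable_of_integral_eq_one hintf).integrableOn hmg
  · refine ⟨‖z₀‖ + ε, ?_⟩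
    rintro _ ⟨x, hx, rfl⟩
    refine norm_le_norm_add_const_of_dist_le (hg x ?_)
    rwa [mem_preimage, mem_ball_zero_iff, ← dist_eq_norm, dist_comm, ← mem_ball] at hx
  · intro t ht
    contrapose! ht
    simp [notMem_support.mp ht]

theorem dist_le_mul_rpow_of_mem_ball {X : Type*} [SeminormedAddCommGroup X] {g : X → ℝ}
    {L δ R : ℝ} (hL : 0 ≤ L) (hδ : 0 ≤ δ) (hg : ∀ a b, |g a - g b| ≤ L * ‖a - b‖ ^ δ)
    {x x₀ : X} (hx : x ∈ ball x₀ R) : dist (g x) (g x₀) ≤ L * R ^ δ :=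
  calc dist (g x) (g x₀) ≤ L * ‖x - x₀‖ ^ δ := hg x x₀
    _ ≤ L * R ^ δ := by gcongr; exact (mem_ball_iff_norm.mp hx).le

theorem abs_max_neg_zero_sub_max_neg_zero_le (a b : ℝ) :
    |max (-a) 0 - max (-b) 0| ≤ |a - b| :=
  (abs_max_sub_max_le_abs _ _ _).trans_eq (by rw [neg_sub_neg, abs_sub_comm])

theorem max_neg_zero_add_mem_Icc {a η : ℝ} (hη : 0 ≤ η) (ha : a < η) :
    max (-a) 0 + a ∈ Icc 0 η := by
  rcases le_total a 0 with h | h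
  · rw [max_eq_left (by linarith)]; constructor <;> linarith
  · rw [max_eq_right (by linarith)]; constructor <;> linarith

theorem mul_rpow_mul_div_rpow_one_div {L δ η s : ℝ} (hL : 0 < L) (hδ : δ ≠ 0) (hη : 0 ≤ η)
    (hs : 0 ≤ s) : L * (s * (η / L) ^ (1 / δ)) ^ δ = η * s ^ δ := by
  have hηL : 0 ≤ η / L := by positivity
  rw [mul_rpow hs (rpow_nonneg hηL _), ← rpow_mul hηL, one_div_mul_cancel hδ, rpow_one]
  field_simp

theorem growth_rate_admissible_general
    (f : ℝ → ℝ) (hf : Continuous f)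
    (δ L : ℝ) (hδ0 : 0 < δ) (hL : 0 < L)
    (hHolder : ∀ a b : ℝ, |f a - f b| ≤ L * |a - b| ^ δ)
    (η s : ℝ) (hη : 0 < η) (hs : 0 < s)
    (r : ℝ) (hr : r = s * (η / L) ^ (1 / δ))
    (φ : ℝ → ℝ)
    (hφsupp : Function.support φ ⊆ Set.Ioo (-r) r)
    (hφpos : ∀ x, 0 ≤ φ x) (hφint : ∫ x, φ x = 1)
    (χ : ℝ → ℝ) (hχmeas : Measurable χ)
    (hχ01 : ∀ x, χ x = 0 ∨ χ x = 1)
    (c : ℝ → ℝ)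
    (hc : ∀ α, c α = (1 / 2) * ∫ β, φ β * (η * χ (α - β) + max (-(f (α - β))) 0)) :
    ∀ α, f α < η → |2 * c α + f α| ≤ η * (2 + s ^ δ) := by
  intro α hfα
  have hsupp : support φ ⊆ ball 0 r := by rwa [Real.ball_eq_Ioo, zero_sub, zero_add]
  set fneg : ℝ → ℝ := fun x => max (-(f x)) 0
  have hfneg_meas : AEStronglyMeasurable fneg :=
    (hf.neg.max continuous_const).aestronglyMeasurable
  have hηχ_meas : AEStronglyMeasurable fun x => η * χ x :=
    (hχmeas.const_mul η).aestronglyMeasurable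
  -- `η χ` takes values in `[0, η]`, i.e. within `η / 2` of `η / 2`.
  have hηχ (x : ℝ) (_ : x ∈ ball α r) : dist (η * χ x) (η / 2) ≤ η / 2 := by
    rcases hχ01 x with h | h <;> simp [h, Real.dist_eq, abs_of_pos, hη]
  have hfneg (x : ℝ) (hx : x ∈ ball α r) : dist (fneg x) (fneg α) ≤ η * s ^ δ := by
    rw [← mul_rpow_mul_div_rpow_one_div hL hδ0.ne' hη.le hs.le, ← hr]
    refine dist_le_mul_rpow_of_mem_ball hL.le hδ0.le (fun a b => ?_) hx
    exact (abs_max_neg_zero_sub_max_neg_zero_le _ _).trans (hHolder a b)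
  have h2c : 2 * c α = (φ ⋆ fun x => η * χ x) α + (φ ⋆ fneg) α := by
    rw [hc, ← (convolutionExistsAt_of_dist_le hsupp hφint hηχ_meas hηχ).distrib_add
      (convolutionExistsAt_of_dist_le hsupp hφint hfneg_meas hfneg)]
    simp only [convolution_lsmul, smul_eq_mul, Pi.add_apply, fneg]
    ring
  have hψ := dist_convolution_le (by positivity) hsupp hφpos hφint hηχ_meas hηχ
  have hmoll := dist_convolution_le (by positivity) hsupp hφpos hφint hfneg_meas hfneg
  have hfpos := max_neg_zero_add_mem_Icc hη.le hfα
  rw [Real.dist_eq, abs_le] at hψ hmoll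
  rw [h2c, abs_le]
  constructor <;> linarith [hfpos.1, hfpos.2]

/-- the growth-rate `c = ½ φ_r * (η χ + f₋)` built from a mollifier `φ_r`
supported in `(-r,r)` with `r = s (η/|f|_{C^δ})^{1/δ}` and an indicator `χ` supported
where `f < η` satisfies `|2c + f| ≤ η (2 + s^δ)` wherever `f < η`. -/
theorem growth_rate_admissible
    (f : ℝ → ℝ) (hf : Continuous f)
    (δ L : ℝ) (hδ0 : 0 < δ) (hδ1 : δ ≤ 1) (hL : 0 < L)
    (hHolder : ∀ a b : ℝ, |f a - f b| ≤ L * |a - b| ^ δ)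
    (η s : ℝ) (hη : 0 < η) (hη1 : η < 1) (hs : 0 < s) (hs1 : s < 1)
    (r : ℝ) (hr : r = s * (η / L) ^ (1 / δ))
    (φ : ℝ → ℝ) (hφmeas : MeasureTheory.Integrable φ)
    (hφsupp : Function.support φ ⊆ Set.Ioo (-r) r)
    (hφpos : ∀ x, 0 ≤ φ x) (hφint : ∫ x, φ x = 1)
    (χ : ℝ → ℝ) (hχmeas : Measurable χ)
    (hχ01 : ∀ x, χ x = 0 ∨ χ x = 1)
    (hχsupp : ∀ x, χ x ≠ 0 → f x < η)
    (c : ℝ → ℝ)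
    (hc : ∀ α, c α = (1 / 2) * ∫ β, φ β * (η * χ (α - β) + max (-(f (α - β))) 0)) :
    ∀ α, f α < η → |2 * c α + f α| ≤ η * (2 + s ^ δ) :=
  growth_rate_admissible_general f hf δ L hδ0 hL hHolder η s hη hs r hr φ hφsupp hφpos hφint χ
    hχmeas hχ01 c hc
end

section
/- Let $v : \mathbb{R}^2 \to \mathbb{C}$ be defined for $x$ away from the union of the images of two $C^1$ closed curves $z_\pm$ of length at most $\ell$ by $v(x)^* = -\frac{1}{2\pi i}\sum_{b=\pm}\int_{\mathbb{T}}\frac{(\partial_\alpha z_b(\beta))_2}{x - z_b(\beta)}\,d\beta$. Then for every such $x$, $|v(x)| \leq \frac{\ell^2}{8\pi}\sum_{b=\pm}\frac{\|\partial_\alpha z_b\|_{C^0}^2}{\mathrm{dist}(x, \mathrm{Im}\,z_b)^2}$; in particular $v(x) = O(|x|^{-2})$ as $|x| \to \infty$. -/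
open Real MeasureTheory intervalIntegral Metric

/-!
Each curve is closed, so `∫ (∂_α z)₂ = 0` and the Cauchy kernel `1 / (x - z β)` may be replaced
by `1 / (x - z β) - 1 / (x - z 0)`. This difference is at most `‖z β - z 0‖ / d² ≤ M |β| / d²`
with `d = dist(x, Im z)`, and `∫_{-ℓ/2}^{ℓ/2} |β| dβ = ℓ² / 4` gives the constant `ℓ² / 8π`.
-/

theorem integral_abs_neg_to_self {a : ℝ} (ha : 0 ≤ a) : ∫ β in (-a)..a, |β| = a ^ 2 := by
  have hint : ∀ b c : ℝ, IntervalIntegrable (fun β : ℝ => |β|) volume b c :=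
    fun _ _ => continuous_abs.intervalIntegrable _ _
  have hpos : ∫ β in (0:ℝ)..a, |β| = ∫ β in (0:ℝ)..a, β :=
    integral_congr fun β hβ => abs_of_nonneg (Set.uIcc_of_le ha ▸ hβ).1
  have hneg : ∫ β in (-a)..0, |β| = ∫ β in (0:ℝ)..a, |β| := by
    simpa using (integral_comp_neg (a := 0) (b := a) (fun β => |β|)).symm
  rw [← integral_add_adjacent_intervals (hint _ 0) (hint 0 _), hneg, hpos, integral_id]
  ring

theorem norm_inv_sub_inv_le {𝕜 : Type*} [NormedField 𝕜] {a b : 𝕜} {d : ℝ} (hd : 0 < d)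
    (ha : d ≤ ‖a‖) (hb : d ≤ ‖b‖) : ‖a⁻¹ - b⁻¹‖ ≤ ‖b - a‖ / d ^ 2 := by
  have ha0 : a ≠ 0 := norm_pos_iff.mp (hd.trans_le ha)
  have hb0 : b ≠ 0 := norm_pos_iff.mp (hd.trans_le hb)
  rw [inv_sub_inv ha0 hb0, norm_div, norm_mul]
  gcongr
  nlinarith

theorem integral_im_deriv_eq_zero {z : ℝ → ℂ} {a b : ℝ} (hz : ContDiff ℝ 1 z) (hab : z a = z b) :
    ∫ β in a..b, (deriv z β).im = 0 := by
  have hint : IntervalIntegrable (deriv z) volume a b :=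
    (hz.continuous_deriv le_rfl).intervalIntegrable _ _
  have him := Complex.imCLM.intervalIntegral_comp_comm hint
  simp only [Complex.imCLM_apply] at him
  rw [him, integral_deriv_eq_sub (fun β _ => (hz.differentiable one_ne_zero) β) hint, hab,
    sub_self, Complex.zero_im]

theorem norm_integral_div_sub_le_of_integral_eq_zero {w z : ℝ → ℂ} {x : ℂ} {a M L d : ℝ}
    (ha : 0 ≤ a) (hw : Continuous w) (hz : Continuous z) (hw0 : ∫ β in (-a)..a, w β = 0)
    (hwM : ∀ β, ‖w β‖ ≤ M) (hzL : ∀ β, ‖z β - z 0‖ ≤ L * |β|)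
    (hd : 0 < d) (hdz : ∀ β, d ≤ ‖x - z β‖) :
    ‖∫ β in (-a)..a, w β / (x - z β)‖ ≤ M * L * a ^ 2 / d ^ 2 := by
  have hne : ∀ β, x - z β ≠ 0 := fun β => norm_pos_iff.mp (hd.trans_le (hdz β))
  have hrecentre : ∫ β in (-a)..a, w β / (x - z β)
      = ∫ β in (-a)..a, w β * ((x - z β)⁻¹ - (x - z 0)⁻¹) := by
    have hint : IntervalIntegrable (fun β => w β / (x - z β)) volume (-a) a :=
      (hw.div (continuous_const.sub hz) hne).intervalIntegrable _ _
    simp_rw [mul_sub, ← div_eq_mul_inv]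
    rw [integral_sub hint ((hw.div_const _).intervalIntegrable _ _), intervalIntegral.integral_div,
      hw0, zero_div, sub_zero]
  have hbound : ∀ β, ‖w β * ((x - z β)⁻¹ - (x - z 0)⁻¹)‖ ≤ M * L / d ^ 2 * |β| := fun β =>
    calc ‖w β * ((x - z β)⁻¹ - (x - z 0)⁻¹)‖
        ≤ M * (‖z β - z 0‖ / d ^ 2) := by
          rw [norm_mul]
          refine mul_le_mul (hwM β) ?_ (norm_nonneg _) ((norm_nonneg _).trans (hwM 0))
          simpa using norm_inv_sub_inv_le hd (hdz β) (hdz 0)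
      _ ≤ M * (L * |β| / d ^ 2) := by
          gcongr
          · exact (norm_nonneg _).trans (hwM 0)
          · exact hzL β
      _ = M * L / d ^ 2 * |β| := by ring
  calc ‖∫ β in (-a)..a, w β / (x - z β)‖
      ≤ ∫ β in (-a)..a, M * L / d ^ 2 * |β| := by
        rw [hrecentre]
        exact norm_integral_le_of_norm_le (by linarith) (ae_of_all _ fun β _ => hbound β)
          ((continuous_const.mul continuous_abs).intervalIntegrable _ _)
    _ = M * L * a ^ 2 / d ^ 2 := by
        rw [intervalIntegral.integral_const_mul, integral_abs_neg_to_self ha]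
        ring

theorem norm_integral_im_deriv_div_le {ℓ M : ℝ} {z : ℝ → ℂ} {x : ℂ} (hℓ : 0 < ℓ)
    (hper : Function.Periodic z ℓ) (hz : ContDiff ℝ 1 z) (hM : ∀ α, ‖deriv z α‖ ≤ M)
    (hx : x ∉ Set.range z) :
    ‖∫ β in (-(ℓ / 2))..(ℓ / 2), ((deriv z β).im : ℂ) / (x - z β)‖
      ≤ ℓ ^ 2 * M ^ 2 / (4 * infDist x (Set.range z) ^ 2) := by
  have hd : 0 < infDist x (Set.range z) :=
    ((hper.compact_of_continuous hℓ.ne' hz.continuous).isClosed.notMem_iff_infDist_pos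
      (Set.range_nonempty z)).mp hx
  have hdz : ∀ β, infDist x (Set.range z) ≤ ‖x - z β‖ := fun β => by
    simpa [dist_eq_norm] using infDist_le_dist_of_mem (Set.mem_range_self (f := z) β)
  have hclosed : z (-(ℓ / 2)) = z (ℓ / 2) := by
    simpa [show -(ℓ / 2) + ℓ = ℓ / 2 by ring] using (hper (-(ℓ / 2))).symm
  have hw0 : ∫ β in (-(ℓ / 2))..(ℓ / 2), ((deriv z β).im : ℂ) = 0 := by
    rw [integral_ofReal, integral_im_deriv_eq_zero hz hclosed, Complex.ofReal_zero]
  have hwM : ∀ β, ‖((deriv z β).im : ℂ)‖ ≤ M := fun β => by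
    rw [Complex.norm_real]
    exact (Complex.abs_im_le_norm _).trans (hM β)
  have hlip : ∀ β, ‖z β - z 0‖ ≤ M * |β| := fun β => by
    simpa [Real.norm_eq_abs] using convex_univ.norm_image_sub_le_of_norm_deriv_le
      (fun t _ => (hz.differentiable one_ne_zero) t) (fun t _ => hM t)
      (Set.mem_univ 0) (Set.mem_univ β)
  calc _ ≤ M * M * (ℓ / 2) ^ 2 / infDist x (Set.range z) ^ 2 :=
        norm_integral_div_sub_le_of_integral_eq_zero (by positivity)
          (Complex.continuous_ofReal.comp (Complex.continuous_im.comp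
            (hz.continuous_deriv le_rfl))) hz.continuous hw0 hwM hlip hd hdz
    _ = ℓ ^ 2 * M ^ 2 / (4 * infDist x (Set.range z) ^ 2) := by ring

/-- quadratic decay of the coarse-grained velocity
`v(x)^* = -(2πi)⁻¹ Σ_{b=±} ∫_𝕋 (∂_α z_b(β))₂/(x - z_b(β)) dβ` generated by two `C¹`
closed curves of length at most `ℓ`:
`|v(x)| ≤ (ℓ²/8π) Σ_b ‖∂_α z_b‖_{C⁰}² / dist(x, Im z_b)²`. -/
theorem velocity_quadratic_decay
    (ℓ : ℝ) (hℓ : 0 < ℓ)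
    (zp zm : ℝ → ℂ)
    (hperp : Function.Periodic zp ℓ) (hperm : Function.Periodic zm ℓ)
    (hzp : ContDiff ℝ 1 zp) (hzm : ContDiff ℝ 1 zm)
    (Mp Mm : ℝ)
    (hMp : ∀ α, ‖deriv zp α‖ ≤ Mp) (hMm : ∀ α, ‖deriv zm α‖ ≤ Mm)
    (v : ℂ → ℂ)
    (hv : ∀ x : ℂ, x ∉ Set.range zp ∪ Set.range zm →
      (starRingEnd ℂ) (v x)
        = -(1 / (2 * π * Complex.I)) *
            ((∫ β in (-(ℓ / 2))..(ℓ / 2), ((deriv zp β).im : ℂ) / (x - zp β))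
              + ∫ β in (-(ℓ / 2))..(ℓ / 2), ((deriv zm β).im : ℂ) / (x - zm β))) :
    ∀ x : ℂ, x ∉ Set.range zp ∪ Set.range zm →
      ‖v x‖ ≤ ℓ ^ 2 / (8 * π) *
        (Mp ^ 2 / (infDist x (Set.range zp)) ^ 2
          + Mm ^ 2 / (infDist x (Set.range zm)) ^ 2) := by
  intro x hx
  obtain ⟨hxp, hxm⟩ := not_or.mp hx
  have hp := norm_integral_im_deriv_div_le hℓ hperp hzp hMp hxp
  have hm := norm_integral_im_deriv_div_le hℓ hperm hzm hMm hxm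
  have h2πI : ‖2 * (π : ℂ) * Complex.I‖ = 2 * π := by simp [abs_of_pos pi_pos]
  rw [← Complex.norm_conj, hv x hx, norm_mul, norm_neg, norm_div, norm_one, h2πI]
  refine (mul_le_mul_of_nonneg_left ((norm_add_le _ _).trans (add_le_add hp hm))
    (by positivity)).trans_eq ?_
  field_simp
  ring
end
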